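/- Let n ≥ 1. In the space of n×n real matrices with its standard topology, the closure of the set {B : Bᵀ = B and I − B·B is positive definite} equals the set {B : Bᵀ = B and I − B·B is positive semi-definite}. -/

import Mathlib

open Matrix Filter Topology

/-!
The condition `(1 - B * B).PosSemidef` is closed, being the preimage of the closed positive
semidefinite cone. Conversely, for `|t| < 1` we have
`1 - (t • B) * (t • B) = (1 - t ^ 2) • 1 + t ^ 2 • (1 - B * B)`, which is positive definite as soon
as `1 - B * B` is positive semidefinite, and `t • B → B` as `t → 1⁻`.
-/

theorem Matrix.isClosed_setOf_posSemidef {n R : Type*} [Fintype n] [Ring R] [PartialOrder R]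
    [StarRing R] [TopologicalSpace R] [IsTopologicalRing R] [ContinuousStar R]
    [OrderClosedTopology R] :
    IsClosed {A : Matrix n n R | A.PosSemidef} := by
  simp_rw [posSemidef_iff_dotProduct_mulVec, Set.ofPred_and, Set.ofPred_forall]
  refine .inter (isClosed_eq continuous_id.matrix_conjTranspose continuous_id) <|
    isClosed_iInter fun x => isClosed_le continuous_const ?_
  exact continuous_const.dotProduct (continuous_id.matrix_mulVec continuous_const)

theorem Matrix.PosSemidef.posDef_one_sub_smul_mul_self {n : Type*} [Fintype n] [DecidableEq n]
    {B : Matrix n n ℝ} (hB : (1 - B * B).PosSemidef) {t : ℝ} (ht : |t| < 1) :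
    (1 - t • B * t • B).PosDef := by
  have hdecomp : 1 - t • B * t • B = (1 - t ^ 2) • (1 : Matrix n n ℝ) + t ^ 2 • (1 - B * B) := by
    rw [smul_mul_smul_comm, smul_sub, sub_smul, one_smul, sq]
    abel
  have ht2 : 0 < 1 - t ^ 2 := by nlinarith [abs_nonneg t, sq_abs t]
  rw [hdecomp]
  exact (PosDef.one.smul ht2).add_posSemidef (hB.smul (sq_nonneg t))

theorem stmt14_general (n : ℕ) :
    closure {B : Matrix (Fin n) (Fin n) ℝ | Bᵀ = B ∧ (1 - B * B).PosDef}
      = {B : Matrix (Fin n) (Fin n) ℝ | Bᵀ = B ∧ (1 - B * B).PosSemidef} := by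
  refine subset_antisymm (closure_minimal (fun B hB => ⟨hB.1, hB.2.posSemidef⟩) ?_) ?_
  · exact (isClosed_eq continuous_id.matrix_transpose continuous_id).inter <|
      isClosed_setOf_posSemidef.preimage (continuous_const.sub (continuous_id.mul continuous_id))
  · rintro B ⟨hBsymm, hB⟩
    have hlim : Tendsto (fun t : ℝ => t • B) (𝓝[<] 1) (𝓝 B) :=
      ((continuous_id.smul continuous_const).tendsto' 1 B (one_smul ℝ B)).mono_left
        nhdsWithin_le_nhds
    refine mem_closure_of_tendsto hlim ?_
    filter_upwards [Ioo_mem_nhdsLT (neg_lt_self one_pos)] with t ht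
    exact ⟨by rw [transpose_smul, hBsymm], hB.posDef_one_sub_smul_mul_self (abs_lt.mpr ht)⟩

theorem stmt14 (n : ℕ) (hn : 1 ≤ n) :
    closure {B : Matrix (Fin n) (Fin n) ℝ | Bᵀ = B ∧ (1 - B * B).PosDef}
      = {B : Matrix (Fin n) (Fin n) ℝ | Bᵀ = B ∧ (1 - B * B).PosSemidef} :=
  stmt14_general n
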